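/- Easy direction of the hypergraph Cheeger-type inequality: for any disjoint sets L, R ⊆ V with L ∪ R ≠ ∅, the signed indicator vector χ_{L,R} (equal to 1 on L, −1 on R, and 0 elsewhere) satisfies D(χ_{L,R}) ≤ 2·β_H(L, R). In particular, the infimum of D(f) over non-zero f ∈ ℝ^V is at most 2·β_H(L, R). -/
import Mathlib


open Finset

/-- The degree of a vertex in a hypergraph `(V, E, w)`: the total weight of the edges
containing it. -/
noncomputable def hDeg {V : Type*} [DecidableEq V]
    (E : Finset (Finset V)) (w : Finset V → ℝ) (v : V) : ℝ :=
  ∑ e ∈ E.filter (fun e => v ∈ e), w e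

/-- The volume of a vertex set in a hypergraph. -/
noncomputable def hVol {V : Type*} [DecidableEq V]
    (E : Finset (Finset V)) (w : Finset V → ℝ) (S : Finset V) : ℝ :=
  ∑ v ∈ S, hDeg E w v

/-- `w(A, B | C)`: the total weight of the hyperedges intersecting both `A` and `B`
and avoiding `C`. -/
noncomputable def hCut {V : Type*} [DecidableEq V]
    (E : Finset (Finset V)) (w : Finset V → ℝ) (A B C : Finset V) : ℝ :=
  ∑ e ∈ E, if (e ∩ A).Nonempty ∧ (e ∩ B).Nonempty ∧ e ∩ C = ∅ then w e else 0

/-- The hypergraph bipartiteness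
`β_H(L, R) = (2w(L | V∖L) + 2w(R | V∖R) + w(L, V∖L | R) + w(R, V∖R | L)) / vol(L ∪ R)`. -/
noncomputable def hBip {V : Type*} [Fintype V] [DecidableEq V]
    (E : Finset (Finset V)) (w : Finset V → ℝ) (L R : Finset V) : ℝ :=
  (2 * hCut E w L L Lᶜ + 2 * hCut E w R R Rᶜ +
      hCut E w L Lᶜ R + hCut E w R Rᶜ L) / hVol E w (L ∪ R)

/-- The maximum of `f` over a finite set (zero on the empty set). -/
noncomputable def fmax {V : Type*} (e : Finset V) (f : V → ℝ) : ℝ :=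
  if h : e.Nonempty then e.sup' h f else 0

/-- The minimum of `f` over a finite set (zero on the empty set). -/
noncomputable def fmin {V : Type*} (e : Finset V) (f : V → ℝ) : ℝ :=
  if h : e.Nonempty then e.inf' h f else 0

/-- The discrepancy ratio of a vector `f` with respect to a hypergraph:
`D(f) = (Σ_e w(e)·(max_{u∈e} f(u) + min_{v∈e} f(v))²) / (Σ_v deg(v)·f(v)²)`. -/
noncomputable def hDisc {V : Type*} [Fintype V] [DecidableEq V]
    (E : Finset (Finset V)) (w : Finset V → ℝ) (f : V → ℝ) : ℝ :=
  (∑ e ∈ E, w e * (fmax e f + fmin e f) ^ 2) / (∑ v, hDeg E w v * f v ^ 2)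

lemma fmax_eq_of {V : Type*} {e : Finset V} (h : e.Nonempty) {f : V → ℝ} {c : ℝ}
    (hub : ∀ v ∈ e, f v ≤ c) (hex : ∃ u ∈ e, f u = c) : fmax e f = c := by
  rw [fmax, dif_pos h]
  obtain ⟨u, hu, hc⟩ := hex
  exact le_antisymm (Finset.sup'_le h f hub) (hc ▸ Finset.le_sup' f hu)

lemma fmin_eq_of {V : Type*} {e : Finset V} (h : e.Nonempty) {f : V → ℝ} {c : ℝ}
    (hlb : ∀ v ∈ e, c ≤ f v) (hex : ∃ u ∈ e, f u = c) : fmin e f = c := by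
  rw [fmin, dif_pos h]
  obtain ⟨u, hu, hc⟩ := hex
  exact le_antisymm (hc ▸ Finset.inf'_le f hu) (Finset.le_inf' h f hlb)

/-- **Easy direction of the hypergraph Cheeger-type inequality** (Lemma 7.9): the signed
indicator vector of a pair of disjoint sets `(L, R)` has discrepancy ratio at most
`2·β_H(L, R)`; in particular the infimum of `D(f)` over non-zero `f` is at most
`2·β_H(L, R)`. -/
theorem hypergraph_cheeger_easy_direction
    {V : Type*} [Fintype V] [DecidableEq V]
    (E : Finset (Finset V)) (w : Finset V → ℝ)
    (hw : ∀ e ∈ E, 0 ≤ w e)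
    (hrank : ∀ e ∈ E, 2 ≤ e.card)
    (hdegpos : ∀ v, 0 < hDeg E w v)
    (L R : Finset V) (hLR : Disjoint L R) (hne : (L ∪ R).Nonempty)
    (chi : V → ℝ)
    (hchi : ∀ v, chi v = if v ∈ L then 1 else if v ∈ R then -1 else 0) :
    hDisc E w chi ≤ 2 * hBip E w L R ∧
      sInf {x : ℝ | ∃ f : V → ℝ, f ≠ 0 ∧ hDisc E w f = x} ≤ 2 * hBip E w L R := by
  -- basic facts about chi
  have hchiL : ∀ v ∈ L, chi v = 1 := by
    intro v hv; rw [hchi]; simp [hv]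
  have hchiR : ∀ v ∈ R, chi v = -1 := by
    intro v hv
    have hvL : v ∉ L := fun h => (Finset.disjoint_left.mp hLR) h hv
    rw [hchi]; simp [hv, hvL]
  have hchi0 : ∀ v, v ∉ L → v ∉ R → chi v = 0 := by
    intro v h1 h2; rw [hchi]; simp [h1, h2]
  have hub : ∀ v, chi v ≤ 1 := by
    intro v; rw [hchi]; split_ifs <;> norm_num
  have hlb : ∀ v, -1 ≤ chi v := by
    intro v; rw [hchi]; split_ifs <;> norm_num
  -- per-edge inequality
  set T1 : Finset V → ℝ := fun e =>
    if (e ∩ L).Nonempty ∧ (e ∩ L).Nonempty ∧ e ∩ Lᶜ = ∅ then w e else 0 with hT1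
  set T2 : Finset V → ℝ := fun e =>
    if (e ∩ R).Nonempty ∧ (e ∩ R).Nonempty ∧ e ∩ Rᶜ = ∅ then w e else 0 with hT2
  set T3 : Finset V → ℝ := fun e =>
    if (e ∩ L).Nonempty ∧ (e ∩ Lᶜ).Nonempty ∧ e ∩ R = ∅ then w e else 0 with hT3
  set T4 : Finset V → ℝ := fun e =>
    if (e ∩ R).Nonempty ∧ (e ∩ Rᶜ).Nonempty ∧ e ∩ L = ∅ then w e else 0 with hT4
  have key : ∀ e ∈ E, w e * (fmax e chi + fmin e chi) ^ 2 ≤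
      4 * T1 e + 4 * T2 e + 2 * T3 e + 2 * T4 e := by
    intro e he
    have hene : e.Nonempty := Finset.card_pos.mp (by have := hrank e he; omega)
    have hwn := hw e he
    have hT1n : 0 ≤ T1 e := by rw [hT1]; dsimp only; split_ifs <;> [exact hwn; rfl]
    have hT2n : 0 ≤ T2 e := by rw [hT2]; dsimp only; split_ifs <;> [exact hwn; rfl]
    have hT3n : 0 ≤ T3 e := by rw [hT3]; dsimp only; split_ifs <;> [exact hwn; rfl]
    have hT4n : 0 ≤ T4 e := by rw [hT4]; dsimp only; split_ifs <;> [exact hwn; rfl]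
    by_cases ha : (e ∩ L).Nonempty
    · obtain ⟨u, hu⟩ := ha
      obtain ⟨hue, huL⟩ := Finset.mem_inter.mp hu
      have hM : fmax e chi = 1 :=
        fmax_eq_of hene (fun v _ => hub v) ⟨u, hue, hchiL u huL⟩
      by_cases hb : (e ∩ R).Nonempty
      · obtain ⟨x, hx⟩ := hb
        obtain ⟨hxe, hxR⟩ := Finset.mem_inter.mp hx
        have hm : fmin e chi = -1 :=
          fmin_eq_of hene (fun v _ => hlb v) ⟨x, hxe, hchiR x hxR⟩
        rw [hM, hm]
        norm_num
        linarith
      · have hbe : e ∩ R = ∅ := Finset.not_nonempty_iff_eq_empty.mp hb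
        have hnR : ∀ v ∈ e, v ∉ R := by
          intro v hv hvR
          exact Finset.notMem_empty v (hbe ▸ Finset.mem_inter.mpr ⟨hv, hvR⟩)
        by_cases hc : (e \ (L ∪ R)).Nonempty
        · obtain ⟨x, hx⟩ := hc
          obtain ⟨hxe, hxn⟩ := Finset.mem_sdiff.mp hx
          have hxL : x ∉ L := fun h => hxn (Finset.mem_union_left _ h)
          have hxR : x ∉ R := fun h => hxn (Finset.mem_union_right _ h)
          have hm : fmin e chi = 0 := by
            refine fmin_eq_of hene (fun v hv => ?_) ⟨x, hxe, hchi0 x hxL hxR⟩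
            by_cases hvL : v ∈ L
            · rw [hchiL v hvL]; norm_num
            · rw [hchi0 v hvL (hnR v hv)]
          have hT3e : T3 e = w e := by
            rw [hT3]; dsimp only
            rw [if_pos ⟨⟨u, hu⟩, ⟨x, Finset.mem_inter.mpr ⟨hxe, Finset.mem_compl.mpr hxL⟩⟩, hbe⟩]
          rw [hM, hm, hT3e]
          norm_num
          linarith
        · have hce : ∀ v ∈ e, v ∈ L := by
            intro v hv
            by_contra hvL
            exact hc ⟨v, Finset.mem_sdiff.mpr ⟨hv, by
              intro h
              rcases Finset.mem_union.mp h with h' | h'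
              · exact hvL h'
              · exact hnR v hv h'⟩⟩
          have hm : fmin e chi = 1 :=
            fmin_eq_of hene (fun v hv => (hchiL v (hce v hv)).ge) ⟨u, hue, hchiL u huL⟩
          have hT1e : T1 e = w e := by
            rw [hT1]; dsimp only
            rw [if_pos ⟨⟨u, hu⟩, ⟨u, hu⟩, Finset.eq_empty_iff_forall_notMem.mpr (by
              intro v hv
              obtain ⟨hve, hvc⟩ := Finset.mem_inter.mp hv
              exact (Finset.mem_compl.mp hvc) (hce v hve))⟩]
          rw [hM, hm, hT1e]
          norm_num
          linarith
    · have hae : e ∩ L = ∅ := Finset.not_nonempty_iff_eq_empty.mp ha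
      have hnL : ∀ v ∈ e, v ∉ L := by
        intro v hv hvL
        exact Finset.notMem_empty v (hae ▸ Finset.mem_inter.mpr ⟨hv, hvL⟩)
      by_cases hb : (e ∩ R).Nonempty
      · obtain ⟨u, hu⟩ := hb
        obtain ⟨hue, huR⟩ := Finset.mem_inter.mp hu
        have hm : fmin e chi = -1 :=
          fmin_eq_of hene (fun v _ => hlb v) ⟨u, hue, hchiR u huR⟩
        by_cases hc : (e \ (L ∪ R)).Nonempty
        · obtain ⟨x, hx⟩ := hc
          obtain ⟨hxe, hxn⟩ := Finset.mem_sdiff.mp hx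
          have hxL : x ∉ L := fun h => hxn (Finset.mem_union_left _ h)
          have hxR : x ∉ R := fun h => hxn (Finset.mem_union_right _ h)
          have hM : fmax e chi = 0 := by
            refine fmax_eq_of hene (fun v hv => ?_) ⟨x, hxe, hchi0 x hxL hxR⟩
            by_cases hvR : v ∈ R
            · rw [hchiR v hvR]; norm_num
            · rw [hchi0 v (hnL v hv) hvR]
          have hT4e : T4 e = w e := by
            rw [hT4]; dsimp only
            rw [if_pos ⟨⟨u, hu⟩, ⟨x, Finset.mem_inter.mpr ⟨hxe, Finset.mem_compl.mpr hxR⟩⟩, hae⟩]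
          rw [hM, hm, hT4e]
          norm_num
          linarith
        · have hce : ∀ v ∈ e, v ∈ R := by
            intro v hv
            by_contra hvR
            exact hc ⟨v, Finset.mem_sdiff.mpr ⟨hv, by
              intro h
              rcases Finset.mem_union.mp h with h' | h'
              · exact hnL v hv h'
              · exact hvR h'⟩⟩
          have hM : fmax e chi = -1 :=
            fmax_eq_of hene (fun v hv => (hchiR v (hce v hv)).le) ⟨u, hue, hchiR u huR⟩
          have hT2e : T2 e = w e := by
            rw [hT2]; dsimp only
            rw [if_pos ⟨⟨u, hu⟩, ⟨u, hu⟩, Finset.eq_empty_iff_forall_notMem.mpr (by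
              intro v hv
              obtain ⟨hve, hvc⟩ := Finset.mem_inter.mp hv
              exact (Finset.mem_compl.mp hvc) (hce v hve))⟩]
          rw [hM, hm, hT2e]
          norm_num
          linarith
      · have hbe : e ∩ R = ∅ := Finset.not_nonempty_iff_eq_empty.mp hb
        have hnR : ∀ v ∈ e, v ∉ R := by
          intro v hv hvR
          exact Finset.notMem_empty v (hbe ▸ Finset.mem_inter.mpr ⟨hv, hvR⟩)
        obtain ⟨u, hue⟩ := id hene
        have hu0 : chi u = 0 := hchi0 u (hnL u hue) (hnR u hue)
        have hM : fmax e chi = 0 :=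
          fmax_eq_of hene (fun v hv => (hchi0 v (hnL v hv) (hnR v hv)).le) ⟨u, hue, hu0⟩
        have hm : fmin e chi = 0 :=
          fmin_eq_of hene (fun v hv => (hchi0 v (hnL v hv) (hnR v hv)).ge) ⟨u, hue, hu0⟩
        rw [hM, hm]
        norm_num
        linarith
  -- sum up
  have expand : ∑ e ∈ E, (4 * T1 e + 4 * T2 e + 2 * T3 e + 2 * T4 e) =
      2 * (2 * hCut E w L L Lᶜ + 2 * hCut E w R R Rᶜ +
        hCut E w L Lᶜ R + hCut E w R Rᶜ L) := by
    simp only [hCut, hT1, hT2, hT3, hT4, Finset.mul_sum, Finset.sum_add_distrib,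
      mul_add, ← Finset.sum_add_distrib]
    exact Finset.sum_congr rfl fun e _ => by ring
  have hnum : ∑ e ∈ E, w e * (fmax e chi + fmin e chi) ^ 2 ≤
      2 * (2 * hCut E w L L Lᶜ + 2 * hCut E w R R Rᶜ +
        hCut E w L Lᶜ R + hCut E w R Rᶜ L) :=
    expand ▸ Finset.sum_le_sum key
  -- denominator
  have hdenom : (∑ v, hDeg E w v * chi v ^ 2) = hVol E w (L ∪ R) := by
    rw [hVol]
    rw [← Finset.sum_subset (Finset.subset_univ (L ∪ R)) (fun v _ hv => by
      rw [hchi0 v (fun h => hv (Finset.mem_union_left _ h))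
        (fun h => hv (Finset.mem_union_right _ h))]; ring)]
    refine Finset.sum_congr rfl fun v hv => ?_
    rcases Finset.mem_union.mp hv with h | h
    · rw [hchiL v h]; norm_num
    · rw [hchiR v h]; norm_num
  have hvolpos : 0 < hVol E w (L ∪ R) :=
    Finset.sum_pos (fun v _ => hdegpos v) hne
  have part1 : hDisc E w chi ≤ 2 * hBip E w L R := by
    rw [hDisc, hdenom, hBip, ← mul_div_assoc]
    exact (div_le_div_iff_of_pos_right hvolpos).mpr hnum
  refine ⟨part1, ?_⟩
  have hchine : chi ≠ 0 := by
    intro h0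
    obtain ⟨v, hv⟩ := hne
    have h1 : chi v = 0 := congrFun h0 v
    rcases Finset.mem_union.mp hv with h | h
    · rw [hchiL v h] at h1; norm_num at h1
    · rw [hchiR v h] at h1; norm_num at h1
  have hbdd : BddBelow {x : ℝ | ∃ f : V → ℝ, f ≠ 0 ∧ hDisc E w f = x} := by
    refine ⟨0, ?_⟩
    rintro x ⟨f, -, rfl⟩
    exact div_nonneg
      (Finset.sum_nonneg fun e he => mul_nonneg (hw e he) (sq_nonneg _))
      (Finset.sum_nonneg fun v _ => mul_nonneg (hdegpos v).le (sq_nonneg _))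
  exact (csInf_le hbdd ⟨chi, hchine, rfl⟩).trans part1
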